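/- Let · be a partial action of the Hopf algebra A on R, let g ∈ A be a grouplike element with g·1_R = 0, let q ∈ k^× and w ∈ R, and define D_j(a,r) := Σ_{k=0}^{j} (−1)^k · q^{−k(k−1)/2} · binom(j,k)_{q⁻¹} · w^{j−k} · ((g^k a)·r) · w^k for j ∈ ℕ₀, a ∈ A, r ∈ R. Let τ : A → A be an algebra automorphism with τ(g) = q⁻¹·g (τ plays the role of σ⁻¹ for the Hopf–Ore extension A[x,σ]). Assume that for all a, b ∈ A, j ∈ ℕ₀ and r ∈ R one has a·D_j(b,r) = Σ_{(a)} (a₁·1_R)·D_j(τ^j(a₂)·b, r). Then for all a, b ∈ A, i, j ∈ ℕ₀ and r ∈ R: D_j(a, D_i(b,r)) = Σ_{(a)} Σ_{ℓ=0}^{j} binom(j,ℓ)_{q⁻¹} · D_{j−ℓ}(g^ℓ a₁, 1_R) · D_{i+ℓ}(τ^i(a₂)·b, r). (This expresses that the linear extension x^j a · r := D_j(a,r) to the Hopf–Ore extension A[x,σ] satisfies the partial action axiom (PA.3).) -/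
import Mathlib


open TensorProduct

noncomputable section

/-- Gaussian ($q$-)binomial coefficients, defined by the recursion
`binom(0,0)_q = 1`, `binom(n,m)_q = 0` for `m > n`,
`binom(n,m)_q = binom(n-1,m)_q + q^(n-m) * binom(n-1,m-1)_q`. -/
def qbinom {K : Type*} [CommRing K] (q : K) : ℕ → ℕ → K
  | 0, 0 => 1
  | 0, _ + 1 => 0
  | n + 1, 0 => qbinom q n 0
  | n + 1, m + 1 => qbinom q n (m + 1) + q ^ (n - m) * qbinom q n m

/-- A (left) partial action of a bialgebra `H` on an algebra `R`:
(PA.1) `1 · r = r`; (PA.2) `h · (r*s) = Σ (h₁ · r)(h₂ · s)`;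
(PA.3) `h · (m · r) = Σ (h₁ · 1)(h₂m · r)`. -/
structure PartialAction (k H R : Type*) [CommSemiring k] [Semiring H] [Bialgebra k H]
    [Semiring R] [Algebra k R] where
  act : H →ₗ[k] R →ₗ[k] R
  unit_act : ∀ r : R, act 1 r = r
  mul_act : ∀ (h : H) (r s : R),
    act h (r * s) = TensorProduct.lift
      ((LinearMap.mul k R).compl₁₂ (act.flip r) (act.flip s)) (Coalgebra.comul (R := k) h)
  act_act : ∀ (h m : H) (r : R),
    act h (act m r) = TensorProduct.lift
      ((LinearMap.mul k R).compl₁₂ (act.flip 1)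
        ((act.flip r).comp (LinearMap.mulRight k m))) (Coalgebra.comul (R := k) h)

/-- Symmetry (PA.S): `h · (m · r) = Σ (h₁m · r)(h₂ · 1)`. -/
def PartialAction.IsSymmetric {k H R : Type*} [CommSemiring k] [Semiring H] [Bialgebra k H]
    [Semiring R] [Algebra k R] (P : PartialAction k H R) : Prop :=
  ∀ (h m : H) (r : R),
    P.act h (P.act m r) = TensorProduct.lift
      ((LinearMap.mul k R).compl₁₂ ((P.act.flip r).comp (LinearMap.mulRight k m))
        (P.act.flip 1)) (Coalgebra.comul (R := k) h)

/-- A grouplike element: `Δ g = g ⊗ g` and `ε g = 1`. -/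
def IsGrouplike (k : Type*) {H : Type*} [CommSemiring k] [Semiring H] [Bialgebra k H]
    (g : H) : Prop :=
  Coalgebra.comul (R := k) g = g ⊗ₜ[k] g ∧ Coalgebra.counit (R := k) g = 1

/-- A `(1,g)`-primitive element: `Δ x = x ⊗ 1 + g ⊗ x`. -/
def IsOneGPrimitive (k : Type*) {H : Type*} [CommSemiring k] [Semiring H] [Bialgebra k H]
    (g x : H) : Prop :=
  Coalgebra.comul (R := k) x = x ⊗ₜ[k] (1 : H) + g ⊗ₜ[k] x

end

/-- The linear map `a ↦ D_j(a,r) = Σ_{i=0}^{j} (-1)^i q^{-i(i-1)/2} binom(j,i)_{q⁻¹}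
w^{j-i} ((gⁱa) · r) wⁱ`. -/
def DL {k A R : Type*} [Field k] [Ring A] [Algebra k A] [Ring R] [Algebra k R]
    (act : A →ₗ[k] R →ₗ[k] R) (g : A) (w : R) (q : k) (j : ℕ) (r : R) : A →ₗ[k] R :=
  ∑ i ∈ Finset.range (j + 1),
    ((-1 : k) ^ i * q⁻¹ ^ (i * (i - 1) / 2) * qbinom q⁻¹ j i) •
      ((LinearMap.mulRight k (w ^ i)).comp
        ((LinearMap.mulLeft k (w ^ (j - i))).comp
          ((act.flip r).comp (LinearMap.mulLeft k (g ^ i)))))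


namespace Stmt12Aux
variable {K : Type*} [CommRing K] (p : K)

lemma qbinom_zero_right : ∀ n, qbinom p n 0 = 1
  | 0 => rfl
  | n + 1 => qbinom_zero_right n

lemma qbinom_succ_succ (n m : ℕ) :
    qbinom p (n+1) (m+1) = qbinom p n (m+1) + p ^ (n-m) * qbinom p n m := rfl

lemma qbinom_succ_zero (n : ℕ) : qbinom p (n+1) 0 = qbinom p n 0 := rfl

lemma qbinom_eq_zero : ∀ {n m}, n < m → qbinom p n m = 0
  | 0, _ + 1, _ => rfl
  | n + 1, m + 1, h => by
      rw [qbinom_succ_succ, qbinom_eq_zero (by omega), qbinom_eq_zero (show n < m by omega)]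
      ring

/-- signed coefficient `c(n,m) = (-1)^m p^{m(m-1)/2} qbinom p n m`, zero for `m < 0`. -/
def cc (n : ℕ) (m : ℤ) : K :=
  if 0 ≤ m then (-1) ^ m.toNat * p ^ (m.toNat * (m.toNat - 1) / 2) * qbinom p n m.toNat else 0

lemma cc_natCast (n s : ℕ) :
    cc p n (s : ℤ) = (-1) ^ s * p ^ (s * (s - 1) / 2) * qbinom p n s := by
  simp [cc]

lemma cc_neg (n : ℕ) (m : ℤ) (h : m < 0) : cc p n m = 0 := by
  simp [cc, not_le.mpr h]

lemma cc_eq_zero {n : ℕ} {m : ℤ} (h : (n : ℤ) < m) : cc p n m = 0 := by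
  rcases lt_or_ge m 0 with h0 | h0
  · exact cc_neg p n m h0
  · rw [cc, if_pos h0, qbinom_eq_zero p (by omega), mul_zero]

lemma cc_succ (n : ℕ) (m : ℤ) :
    cc p (n + 1) m = cc p n m - p ^ n * cc p n (m - 1) := by
  rcases lt_trichotomy m 0 with h | h | h
  · rw [cc_neg p _ _ h, cc_neg p _ _ h, cc_neg p _ _ (by omega), mul_zero, sub_zero]
  · subst h
    rw [cc_neg p n (0-1) (by omega), mul_zero, sub_zero]
    simp [cc, qbinom_zero_right]
  · obtain ⟨s, rfl⟩ : ∃ s : ℕ, m = (s : ℤ) + 1 := ⟨(m - 1).toNat, by omega⟩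
    have h1 : ((s : ℤ) + 1) = ((s + 1 : ℕ) : ℤ) := by push_cast; ring
    rw [h1, cc_natCast, cc_natCast, show ((s+1:ℕ):ℤ) - 1 = (s:ℤ) by push_cast; ring,
      cc_natCast]
    rcases le_or_gt s n with hs | hs
    · have h3 : Even (s * (s - 1)) := by
        rcases Nat.even_or_odd s with he | ho
        · exact he.mul_right _
        · rcases Nat.eq_zero_or_pos s with rfl | hp
          · simp
          · exact ((Nat.Odd.sub_odd ho odd_one)).mul_left _
      have hmul : (s+1) * ((s+1) - 1) = s * (s - 1) + 2 * s := by
        rcases s with _ | t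
        · simp
        · show (t+2) * ((t+2) - 1) = (t+1) * ((t+1) - 1) + 2 * (t+1)
          rw [show (t+2)-1 = t+1 from rfl, show (t+1)-1 = t from rfl]
          ring
      have e1 : (s+1) * ((s+1) - 1) / 2 = s * (s-1)/2 + s := by
        rw [Nat.even_iff] at h3
        omega
      rw [qbinom_succ_succ, e1, pow_add]
      have hpow : p ^ (n - s) * p ^ s = p ^ n := by rw [← pow_add]; congr 1; omega
      linear_combination ((-1:K)^(s+1) * p^(s*(s-1)/2) * qbinom p n s) * hpow
    · rw [qbinom_eq_zero p (by omega), qbinom_eq_zero p (by omega),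
        qbinom_eq_zero p (by omega)]
      ring

/-- recursion for the right-hand side sum of the key identity -/
lemma S_succ (i j : ℕ) (m v : ℤ) :
    (∑ l ∈ Finset.range (j+2), qbinom p (j+1) l * cc p (j+1-l) (m-l) * cc p (i+l) v)
      = (∑ l ∈ Finset.range (j+1), qbinom p j l * cc p (j-l) (m-l) * cc p (i+l) v)
        - p^(i+j) *
          ∑ l ∈ Finset.range (j+1), qbinom p j l * cc p (j-l) ((m-1)-l) * cc p (i+l) (v-1) := by
  rw [Finset.sum_range_succ']
  have key1 : ∀ t ∈ Finset.range (j+1),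
      qbinom p (j+1) (t+1) * cc p (j+1-(t+1)) (m-(t+1:ℕ)) * cc p (i+(t+1)) v
        = (qbinom p j (t+1) * cc p (j-t) (m-(t+1:ℕ)) * cc p (i+(t+1)) v)
          + ((p^(j-t) * qbinom p j t * cc p (j-t) ((m-1)-t) * cc p (i+t) v)
            - p^(i+j) * (qbinom p j t * cc p (j-t) ((m-1)-t) * cc p (i+t) (v-1))) := by
    intro t ht
    simp only [Finset.mem_range] at ht
    have htj : t ≤ j := by omega
    rw [show j + 1 - (t+1) = j - t from by omega, qbinom_succ_succ,
      show (i+(t+1)) = (i+t)+1 from by omega, cc_succ p (i+t) v,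
      show (m:ℤ) - ((t+1:ℕ):ℤ) = (m-1) - (t:ℤ) from by push_cast; ring]
    have hpow : p ^ (j-t) * p ^ (i+t) = p ^ (i+j) := by
      rw [← pow_add]; congr 1; omega
    linear_combination (-(qbinom p j t * cc p (j-t) ((m-1) - (t:ℤ)) * cc p (i+t) (v-1))) * hpow
  rw [Finset.sum_congr rfl key1, Finset.sum_add_distrib, Finset.sum_sub_distrib,
    ← Finset.mul_sum]
  have inner : ∀ t ∈ Finset.range j,
      qbinom p j (t+1) * cc p (j-t) (m-(t+1:ℕ)) * cc p (i+(t+1)) v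
        = qbinom p j (t+1) * cc p (j-(t+1)) (m-(t+1:ℕ)) * cc p (i+(t+1)) v
          - p^(j-(t+1)) * qbinom p j (t+1) * cc p (j-(t+1)) ((m-1)-(t+1:ℕ)) * cc p (i+(t+1)) v := by
    intro t ht
    simp only [Finset.mem_range] at ht
    rw [show j - t = (j-(t+1))+1 from by omega, cc_succ p (j-(t+1)) (m - ((t+1:ℕ):ℤ)),
      show (m:ℤ) - ((t+1:ℕ):ℤ) - 1 = (m-1) - ((t+1:ℕ):ℤ) from by push_cast; ring]
    ring
  have hE1 : (∑ t ∈ Finset.range (j+1),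
      qbinom p j (t+1) * cc p (j-t) (m-(t+1:ℕ)) * cc p (i+(t+1)) v)
      = ((∑ l ∈ Finset.range (j+1), qbinom p j l * cc p (j-l) (m-l) * cc p (i+l) v)
          - qbinom p j 0 * cc p (j-0) (m-(0:ℕ)) * cc p (i+0) v)
        - ((∑ l ∈ Finset.range (j+1),
              p^(j-l) * qbinom p j l * cc p (j-l) ((m-1)-l) * cc p (i+l) v)
          - p^(j-0) * qbinom p j 0 * cc p (j-0) ((m-1)-(0:ℕ)) * cc p (i+0) v) := by
    rw [Finset.sum_range_succ, qbinom_eq_zero p (Nat.lt_succ_self j), zero_mul, zero_mul,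
      add_zero, Finset.sum_congr rfl inner, Finset.sum_sub_distrib,
      Finset.sum_range_succ' (fun l => qbinom p j l * cc p (j-l) (m-(l:ℕ)) * cc p (i+l) v) j,
      Finset.sum_range_succ'
        (fun l => p^(j-l) * qbinom p j l * cc p (j-l) ((m-1)-(l:ℕ)) * cc p (i+l) v) j]
    ring
  rw [hE1]
  simp only [Nat.cast_zero, sub_zero, Nat.sub_zero, Nat.add_zero, qbinom_succ_zero]
  rw [cc_succ p j m]
  ring

/-- the key scalar identity -/
lemma key (i : ℕ) : ∀ (j : ℕ) (m v : ℤ),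
    cc p j m * p ^ (i * m.toNat) * cc p i (v - m) =
      ∑ l ∈ Finset.range (j+1), qbinom p j l * cc p (j-l) (m - l) * cc p (i+l) v := by
  intro j
  induction j with
  | zero =>
    intro m v
    rw [Finset.range_one, Finset.sum_singleton]
    rcases eq_or_ne m 0 with rfl | hm
    · simp only [Int.toNat_zero, Nat.mul_zero, pow_zero, mul_one, sub_zero]
      norm_num
      rw [show cc p 0 0 = 1 from by simp [cc, qbinom], show qbinom p 0 0 = 1 from rfl]
      ring
    · have h0 : cc p 0 m = 0 := by
        rcases lt_or_ge m 0 with h | h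
        · exact cc_neg p 0 m h
        · exact cc_eq_zero p (by omega)
      rw [show (((0:ℕ)):ℤ) = (0:ℤ) from rfl, sub_zero, Nat.sub_zero, Nat.add_zero, h0]
      rw [show qbinom p 0 0 = 1 from rfl]
      ring
  | succ j ih =>
    intro m v
    rw [show j + 1 + 1 = j + 2 from rfl, S_succ, ← ih m v, ← ih (m-1) (v-1)]
    rw [cc_succ p j m, show v - 1 - (m - 1) = v - m from by ring]
    rcases le_or_gt m 0 with hm | hm
    · rw [cc_neg p j (m-1) (by omega)]
      ring
    · have ht : m.toNat = (m-1).toNat + 1 := by omega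
      rw [ht, Nat.mul_succ, pow_add]
      ring

section Mod
variable {M : Type*} [AddCommMonoid M] [Module K M]

lemma sum_extend (n N : ℕ) (h : n < N) (coef : ℕ → K) (hz : ∀ v, n < v → coef v = 0)
    (f : ℕ → M) :
    ∑ v ∈ Finset.range (n+1), coef v • f v = ∑ v ∈ Finset.range N, coef v • f v := by
  apply Finset.sum_subset
  · intro x hx
    simp only [Finset.mem_range] at *
    omega
  · intro x hx hnx
    simp only [Finset.mem_range] at hx hnx
    rw [hz x (by omega), zero_smul]

lemma sum_shift (n a N : ℕ) (h : a + n < N) (coef : ℤ → K)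
    (h0 : ∀ z : ℤ, z < 0 → coef z = 0) (h1 : ∀ z : ℤ, (n:ℤ) < z → coef z = 0)
    (f : ℕ → M) :
    ∑ s ∈ Finset.range (n+1), coef (s:ℤ) • f (s+a)
      = ∑ v ∈ Finset.range N, coef ((v:ℤ)-a) • f v := by
  have h2 : ∑ v ∈ Finset.Ico a (a+(n+1)), coef ((v:ℤ)-a) • f v
      = ∑ s ∈ Finset.range (n+1), coef (s:ℤ) • f (s+a) := by
    rw [Finset.sum_Ico_eq_sum_range]
    apply Finset.sum_congr (by congr 1; omega)
    intro s _
    rw [show ((a+s:ℕ):ℤ) - a = (s:ℤ) from by push_cast; ring, Nat.add_comm a s]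
  rw [← h2]
  apply Finset.sum_subset
  · intro x hx
    simp only [Finset.mem_Ico, Finset.mem_range] at *
    omega
  · intro x hx hnx
    simp only [Finset.mem_Ico, Finset.mem_range, not_and, not_lt] at hx hnx
    rcases lt_or_ge x a with hxa | hxa
    · rw [h0 _ (by omega), zero_smul]
    · rw [h1 _ (by push_cast; omega), zero_smul]

/-- the master reindexing identity -/
lemma sums (i j : ℕ) (T : ℕ → ℕ → M) :
    ∑ m ∈ Finset.range (j+1), ∑ s ∈ Finset.range (i+1),
        (cc p j (m:ℤ) * p^(i*m) * cc p i (s:ℤ)) • T m (m+s)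
      = ∑ l ∈ Finset.range (j+1), ∑ u ∈ Finset.range (j-l+1), ∑ v ∈ Finset.range (i+l+1),
          (qbinom p j l * cc p (j-l) (u:ℤ) * cc p (i+l) (v:ℤ)) • T (u+l) v := by
  have hL : ∑ m ∈ Finset.range (j+1), ∑ s ∈ Finset.range (i+1),
        (cc p j (m:ℤ) * p^(i*m) * cc p i (s:ℤ)) • T m (m+s)
      = ∑ m ∈ Finset.range (j+1), ∑ v ∈ Finset.range (i+j+1),
          (cc p j (m:ℤ) * p^(i*m) * cc p i ((v:ℤ)-m)) • T m v := by
    apply Finset.sum_congr rfl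
    intro m hm
    simp only [Finset.mem_range] at hm
    rw [← sum_shift (K := K) i m (i+j+1) (by omega)
        (fun z => cc p j (m:ℤ) * p^(i*m) * cc p i z)
        (fun z hz => show cc p j (m:ℤ) * p^(i*m) * cc p i z = 0 from by
          rw [cc_neg p i z hz, mul_zero])
        (fun z hz => show cc p j (m:ℤ) * p^(i*m) * cc p i z = 0 from by
          rw [cc_eq_zero p hz, mul_zero]) (T m)]
    apply Finset.sum_congr rfl
    intro s _
    rw [Nat.add_comm m s]
  have hR : ∀ l ∈ Finset.range (j+1),
      ∑ u ∈ Finset.range (j-l+1), ∑ v ∈ Finset.range (i+l+1),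
          (qbinom p j l * cc p (j-l) (u:ℤ) * cc p (i+l) (v:ℤ)) • T (u+l) v
        = ∑ m ∈ Finset.range (j+1), ∑ v ∈ Finset.range (i+j+1),
            (qbinom p j l * cc p (j-l) ((m:ℤ)-l) * cc p (i+l) (v:ℤ)) • T m v := by
    intro l hl
    simp only [Finset.mem_range] at hl
    have step1 : ∀ u : ℕ,
        ∑ v ∈ Finset.range (i+l+1),
            (qbinom p j l * cc p (j-l) (u:ℤ) * cc p (i+l) (v:ℤ)) • T (u+l) v
          = cc p (j-l) (u:ℤ) • ∑ v ∈ Finset.range (i+j+1),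
              (qbinom p j l * cc p (i+l) (v:ℤ)) • T (u+l) v := by
      intro u
      calc ∑ v ∈ Finset.range (i+l+1),
              (qbinom p j l * cc p (j-l) (u:ℤ) * cc p (i+l) (v:ℤ)) • T (u+l) v
          = ∑ v ∈ Finset.range (i+l+1),
              cc p (j-l) (u:ℤ) • ((qbinom p j l * cc p (i+l) (v:ℤ)) • T (u+l) v) := by
            refine Finset.sum_congr rfl (fun v _ => ?_)
            rw [smul_smul]
            congr 1
            ring
        _ = cc p (j-l) (u:ℤ) • ∑ v ∈ Finset.range (i+l+1),
              (qbinom p j l * cc p (i+l) (v:ℤ)) • T (u+l) v := by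
            rw [Finset.smul_sum]
        _ = cc p (j-l) (u:ℤ) • ∑ v ∈ Finset.range (i+j+1),
              (qbinom p j l * cc p (i+l) (v:ℤ)) • T (u+l) v := by
            congr 1
            exact sum_extend (K := K) (i+l) (i+j+1) (by omega)
              (fun v => qbinom p j l * cc p (i+l) (v:ℤ))
              (fun v hv => show qbinom p j l * cc p (i+l) (v:ℤ) = 0 from by
                rw [cc_eq_zero p (by exact_mod_cast hv), mul_zero]) (T (u+l))
    have step2 : ∀ m : ℕ,
        cc p (j-l) ((m:ℤ)-l) • ∑ v ∈ Finset.range (i+j+1),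
            (qbinom p j l * cc p (i+l) (v:ℤ)) • T m v
          = ∑ v ∈ Finset.range (i+j+1),
              (qbinom p j l * cc p (j-l) ((m:ℤ)-l) * cc p (i+l) (v:ℤ)) • T m v := by
      intro m
      rw [Finset.smul_sum]
      refine Finset.sum_congr rfl (fun v _ => ?_)
      rw [smul_smul]
      congr 1
      ring
    calc ∑ u ∈ Finset.range (j-l+1), ∑ v ∈ Finset.range (i+l+1),
            (qbinom p j l * cc p (j-l) (u:ℤ) * cc p (i+l) (v:ℤ)) • T (u+l) v
        = ∑ u ∈ Finset.range (j-l+1), cc p (j-l) (u:ℤ) •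
            ∑ v ∈ Finset.range (i+j+1), (qbinom p j l * cc p (i+l) (v:ℤ)) • T (u+l) v :=
          Finset.sum_congr rfl (fun u _ => step1 u)
      _ = ∑ m ∈ Finset.range (j+1), cc p (j-l) ((m:ℤ)-l) •
            ∑ v ∈ Finset.range (i+j+1), (qbinom p j l * cc p (i+l) (v:ℤ)) • T m v :=
          sum_shift (K := K) (j-l) l (j+1) (by omega) (fun z => cc p (j-l) z)
            (fun z hz => cc_neg p (j-l) z hz)
            (fun z hz => cc_eq_zero p hz)
            (fun m => ∑ v ∈ Finset.range (i+j+1), (qbinom p j l * cc p (i+l) (v:ℤ)) • T m v)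
      _ = ∑ m ∈ Finset.range (j+1), ∑ v ∈ Finset.range (i+j+1),
            (qbinom p j l * cc p (j-l) ((m:ℤ)-l) * cc p (i+l) (v:ℤ)) • T m v :=
          Finset.sum_congr rfl (fun m _ => step2 m)
  rw [hL, Finset.sum_congr rfl hR]
  conv_rhs => rw [Finset.sum_comm]
  refine Finset.sum_congr rfl (fun m _ => ?_)
  conv_rhs => rw [Finset.sum_comm]
  refine Finset.sum_congr rfl (fun v _ => ?_)
  rw [← Finset.sum_smul, ← key p i j (m:ℤ) (v:ℤ), Int.toNat_natCast]

end Mod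


section Structural
variable {k A R : Type*} [CommRing k] [Ring A] [Algebra k A] [AddCommMonoid R] [Module k R]

open TensorProduct in
lemma lift_tmul_mul (G : A →ₗ[k] A →ₗ[k] R) (x y : A) (C : A ⊗[k] A) :
    TensorProduct.lift G ((x ⊗ₜ[k] y) * C)
      = TensorProduct.lift (G.compl₁₂ (LinearMap.mulLeft k x) (LinearMap.mulLeft k y)) C := by
  induction C using TensorProduct.induction_on with
  | zero => simp
  | tmul a c =>
      simp [Algebra.TensorProduct.tmul_mul_tmul, LinearMap.compl₁₂_apply]
  | add u v hu hv => rw [mul_add, map_add, map_add, hu, hv]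

end Structural

end Stmt12Aux

/-- axiom (PA.3) for the extension `xʲa · r := D_j(a,r)` to the Hopf–Ore
extension: assuming `a · D_j(b,r) = Σ (a₁·1) D_j(τʲ(a₂)b, r)`, one has
`D_j(a, D_i(b,r)) = Σ_{(a)} Σ_ℓ binom(j,ℓ)_{q⁻¹} D_{j-ℓ}(gˡa₁, 1) D_{i+ℓ}(τⁱ(a₂)b, r)`. -/
theorem stmt12 {k A R : Type*} [Field k] [IsAlgClosed k] [CharZero k]
    [Ring A] [HopfAlgebra k A] [Ring R] [Algebra k R]
    (P : PartialAction k A R) (g : A) (hg : IsGrouplike k g) (hg0 : P.act g 1 = 0)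
    (q : k) (hq : q ≠ 0) (w : R)
    (τ : A ≃ₐ[k] A) (hτg : τ g = q⁻¹ • g)
    (hcomp : ∀ (a b : A) (j : ℕ) (r : R),
      P.act a (DL P.act g w q j r b) =
        TensorProduct.lift ((LinearMap.mul k R).compl₁₂ (P.act.flip 1)
            ((DL P.act g w q j r).comp
              ((LinearMap.mulRight k b).comp (τ ^ j : A ≃ₐ[k] A).toLinearMap)))
          (Coalgebra.comul (R := k) a)) :
    ∀ (a b : A) (i j : ℕ) (r : R),
      DL P.act g w q j (DL P.act g w q i r b) a =
        ∑ l ∈ Finset.range (j + 1), qbinom q⁻¹ j l •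
          TensorProduct.lift ((LinearMap.mul k R).compl₁₂
              ((DL P.act g w q (j - l) 1).comp (LinearMap.mulLeft k (g ^ l)))
              ((DL P.act g w q (i + l) r).comp
                ((LinearMap.mulRight k b).comp (τ ^ i : A ≃ₐ[k] A).toLinearMap)))
            (Coalgebra.comul (R := k) a) := by
  intro a b i j r
  classical
  have hDL : ∀ (n : ℕ) (r₀ : R) (x : A), DL P.act g w q n r₀ x
      = ∑ s ∈ Finset.range (n+1), (Stmt12Aux.cc q⁻¹ n (s:ℤ)) •
          (w^(n-s) * P.act (g^s * x) r₀ * w^s) := by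
    intro n r₀ x
    rw [DL, LinearMap.sum_apply]
    refine Finset.sum_congr rfl (fun s _ => ?_)
    rw [Stmt12Aux.cc_natCast]
    simp only [LinearMap.smul_apply, LinearMap.comp_apply, LinearMap.mulRight_apply,
      LinearMap.mulLeft_apply, LinearMap.flip_apply]
  have htaug : ∀ n : ℕ, (τ^n : A ≃ₐ[k] A) g = q⁻¹^n • g := by
    intro n
    induction n with
    | zero => simp
    | succ n ih =>
        rw [pow_succ, AlgEquiv.mul_apply, hτg, map_smul, ih, smul_smul]
        congr 1
        ring
  have htau : ∀ (m : ℕ) (y : A), (τ^i : A ≃ₐ[k] A) (g^m * y)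
      = q⁻¹^(i*m) • (g^m * (τ^i : A ≃ₐ[k] A) y) := by
    intro m y
    rw [map_mul, map_pow, htaug i, smul_pow, ← pow_mul, smul_mul_assoc]
  have hcm : ∀ (m : ℕ) (x : A), Coalgebra.comul (R := k) (g^m * x)
      = ((g^m) ⊗ₜ[k] (g^m)) * Coalgebra.comul (R := k) x := by
    intro m x
    rw [Bialgebra.comul_mul, Bialgebra.comul_pow, hg.1, Algebra.TensorProduct.tmul_pow]
  rw [hDL j (DL P.act g w q i r b) a]
  have hact : ∀ m ∈ Finset.range (j+1),
      (Stmt12Aux.cc q⁻¹ j (m:ℤ)) • (w^(j-m) * P.act (g^m * a) (DL P.act g w q i r b) * w^m)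
      = (Stmt12Aux.cc q⁻¹ j (m:ℤ)) • (w^(j-m) *
          TensorProduct.lift ((((LinearMap.mul k R).compl₁₂ (P.act.flip 1)
            ((DL P.act g w q i r).comp ((LinearMap.mulRight k b).comp
              (τ ^ i : A ≃ₐ[k] A).toLinearMap))).compl₁₂
            (LinearMap.mulLeft k (g^m)) (LinearMap.mulLeft k (g^m))))
          (Coalgebra.comul (R := k) a) * w^m) := by
    intro m _
    rw [hcomp (g^m * a) b i r, hcm m a, Stmt12Aux.lift_tmul_mul]
  rw [Finset.sum_congr rfl hact]
  generalize Coalgebra.comul (R := k) a = C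
  induction C using TensorProduct.induction_on with
  | zero => simp
  | add u v hu hv =>
      simp only [map_add, mul_add, add_mul, smul_add, Finset.sum_add_distrib] at hu hv ⊢
      rw [hu, hv]
  | tmul x y =>
      simp only [TensorProduct.lift.tmul, LinearMap.compl₁₂_apply, LinearMap.mulLeft_apply,
        LinearMap.mul_apply', LinearMap.flip_apply, LinearMap.comp_apply,
        LinearMap.mulRight_apply, AlgEquiv.toLinearMap_apply]
      have lhs_eq : ∑ m ∈ Finset.range (j+1), Stmt12Aux.cc q⁻¹ j (m:ℤ) •
            (w^(j-m) * (P.act (g^m * x) 1 *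
              DL P.act g w q i r ((τ^i : A ≃ₐ[k] A) (g^m * y) * b)) * w^m)
          = ∑ m ∈ Finset.range (j+1), ∑ s ∈ Finset.range (i+1),
              (Stmt12Aux.cc q⁻¹ j (m:ℤ) * q⁻¹^(i*m) * Stmt12Aux.cc q⁻¹ i (s:ℤ)) •
              (w^(j-m) * P.act (g^m * x) 1 * w^(i+m-(m+s)) *
                P.act (g^(m+s) * ((τ^i : A ≃ₐ[k] A) y * b)) r * w^(m+s)) := by
        refine Finset.sum_congr rfl (fun m hm => ?_)
        rw [htau m y, smul_mul_assoc, mul_assoc (g^m) ((τ^i : A ≃ₐ[k] A) y) b, map_smul,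
          hDL i r (g^m * ((τ^i : A ≃ₐ[k] A) y * b)), Finset.smul_sum, Finset.mul_sum,
          Finset.mul_sum, Finset.sum_mul, Finset.smul_sum]
        refine Finset.sum_congr rfl (fun s hs => ?_)
        simp only [Finset.mem_range] at hs
        rw [show g^s * (g^m * ((τ^i : A ≃ₐ[k] A) y * b))
              = g^(m+s) * ((τ^i : A ≃ₐ[k] A) y * b) from by
            rw [← mul_assoc, ← pow_add, Nat.add_comm s m],
          show i+m-(m+s) = i-s from by omega,
          show w^(m+s) = w^s * w^m from by rw [Nat.add_comm m s, pow_add]]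
        simp only [smul_smul, mul_smul_comm, smul_mul_assoc]
        congr 1
        · ring
        · simp only [mul_assoc]
      have rhs_eq : ∑ l ∈ Finset.range (j+1), qbinom q⁻¹ j l •
            (DL P.act g w q (j-l) 1 (g^l * x) *
              DL P.act g w q (i+l) r ((τ^i : A ≃ₐ[k] A) y * b))
          = ∑ l ∈ Finset.range (j+1), ∑ u ∈ Finset.range (j-l+1), ∑ v ∈ Finset.range (i+l+1),
              (qbinom q⁻¹ j l * Stmt12Aux.cc q⁻¹ (j-l) (u:ℤ) * Stmt12Aux.cc q⁻¹ (i+l) (v:ℤ)) •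
              (w^(j-(u+l)) * P.act (g^(u+l) * x) 1 * w^(i+(u+l)-v) *
                P.act (g^v * ((τ^i : A ≃ₐ[k] A) y * b)) r * w^v) := by
        refine Finset.sum_congr rfl (fun l hl => ?_)
        rw [hDL (j-l) 1 (g^l * x), hDL (i+l) r ((τ^i : A ≃ₐ[k] A) y * b),
          Finset.sum_mul_sum, Finset.smul_sum]
        refine Finset.sum_congr rfl (fun u hu => ?_)
        rw [Finset.smul_sum]
        refine Finset.sum_congr rfl (fun v hv => ?_)
        simp only [Finset.mem_range] at hu hv
        rw [show g^u * (g^l * x) = g^(u+l) * x from by rw [← mul_assoc, ← pow_add],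
          show j-l-u = j-(u+l) from by omega,
          show w^(i+(u+l)-v) = w^u * w^(i+l-v) from by
            rw [← pow_add]; congr 1; omega]
        simp only [smul_smul, mul_smul_comm, smul_mul_assoc]
        congr 1
        · ring
        · simp only [mul_assoc]
      rw [lhs_eq, rhs_eq]
      exact Stmt12Aux.sums q⁻¹ i j (fun m v => w^(j-m) * P.act (g^m * x) 1 * w^(i+m-v) *
        P.act (g^v * ((τ^i : A ≃ₐ[k] A) y * b)) r * w^v)
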